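/- arXiv:2110.03187 — 2 statements merged into one kernel-verified Lean document; each statement's English description precedes it below -/
import Mathlib

section
/- For any N distinct points x_1, ..., x_N in R^d, there exists a unit vector u in R^d such that for all i ≠ j, sqrt(8/(π d)) · (1/N²) · ‖x_i − x_j‖ ≤ |⟨u, x_i − x_j⟩| ≤ ‖x_i − x_j‖. -/
open MeasureTheory Metric Real Set Finset

/-- Wendel-type inequality from log-convexity of `Gamma`. -/
lemma gamma_wendel {x : ℝ} (hx : 0 < x) :
    Real.Gamma (x + 1 / 2) ≤ Real.Gamma x * Real.sqrt x := by
  have hx1 : (0 : ℝ) < x + 1 := by linarith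
  have h := Real.convexOn_log_Gamma.2 (Set.mem_Ioi.mpr hx) (Set.mem_Ioi.mpr hx1)
    (by norm_num : (0:ℝ) ≤ 1/2) (by norm_num : (0:ℝ) ≤ 1/2) (by norm_num)
  simp only [smul_eq_mul, Function.comp_apply] at h
  have harg : (1/2 : ℝ) * x + (1/2 : ℝ) * (x + 1) = x + 1/2 := by ring
  rw [harg] at h
  have hG : 0 < Real.Gamma x := Real.Gamma_pos_of_pos hx
  have hG2 : 0 < Real.Gamma (x + 1/2) := Real.Gamma_pos_of_pos (by linarith)
  have hGadd : Real.Gamma (x + 1) = x * Real.Gamma x := Real.Gamma_add_one hx.ne'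
  have hsq : 0 < Real.sqrt x := Real.sqrt_pos.mpr hx
  rw [← Real.log_le_log_iff hG2 (by positivity)]
  have hlog1 : Real.log (Real.Gamma x * Real.sqrt x)
      = Real.log (Real.Gamma x) + (1/2) * Real.log x := by
    rw [Real.log_mul hG.ne' hsq.ne', Real.log_sqrt hx.le]; ring
  have hlog2 : Real.log (Real.Gamma (x + 1))
      = Real.log x + Real.log (Real.Gamma x) := by
    rw [hGadd, Real.log_mul hx.ne' hG.ne']
  rw [hlog1]
  rw [hlog2] at h
  linarith

/-- Volume of the closed unit ball in `Fin m → ℝ` (with the Euclidean quadratic condition). -/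
lemma volume_pi_ball (m : ℕ) :
    volume {g : Fin m → ℝ | ∑ i, g i ^ 2 ≤ 1} =
      ENNReal.ofReal (Real.sqrt π ^ m / Real.Gamma (m / 2 + 1)) := by
  cases m with
  | zero =>
      have h1 : {g : Fin 0 → ℝ | ∑ i, g i ^ 2 ≤ 1} = Set.univ := by
        ext g; simp
      rw [h1]
      have h2 : (volume : Measure (Fin 0 → ℝ)) Set.univ = 1 := by
        rw [MeasureTheory.volume_pi, Measure.pi_univ]; simp
      rw [h2]
      norm_num [Real.Gamma_one]
  | succ k =>
      have hmp := EuclideanSpace.volume_preserving_symm_measurableEquiv_toLp (Fin (k+1))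
      have hmeas : MeasurableSet {g : Fin (k+1) → ℝ | ∑ i, g i ^ 2 ≤ 1} := by
        apply measurableSet_le _ measurable_const
        exact Finset.measurable_sum _ fun i _ => (measurable_pi_apply i).pow_const 2
      have hset : ((MeasurableEquiv.toLp 2 (Fin (k+1) → ℝ)).symm) ⁻¹'
          {g : Fin (k+1) → ℝ | ∑ i, g i ^ 2 ≤ 1} = Metric.closedBall 0 1 := by
        ext w
        have hw : ‖w‖ = Real.sqrt (∑ i, w i ^ 2) := by
          rw [EuclideanSpace.norm_eq]
          congr 1
          refine Finset.sum_congr rfl fun i _ => ?_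
          rw [Real.norm_eq_abs, sq_abs]
        simp only [Set.mem_preimage, Set.mem_setOf_eq, mem_closedBall_zero_iff]
        have happ : ∀ i, ((MeasurableEquiv.toLp 2 (Fin (k+1) → ℝ)).symm) w i = w i := fun i => rfl
        simp only [happ]
        have hsum : (0:ℝ) ≤ ∑ i, w i ^ 2 := by positivity
        have hw2 : ‖w‖ ^ 2 = ∑ i, w i ^ 2 := by rw [hw, Real.sq_sqrt hsum]
        constructor
        · intro h; nlinarith [norm_nonneg w]
        · intro h
          nlinarith [norm_nonneg w, sq_nonneg (‖w‖ - 1), sq_nonneg (‖w‖ + 1)]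
      have := hmp.measure_preimage hmeas.nullMeasurableSet
      rw [hset] at this
      rw [← this, EuclideanSpace.volume_closedBall]
      simp [Fintype.card_fin, ENNReal.ofReal_one]

/-- Volume of a slab intersected with the unit ball. -/
lemma slab_volume_le (m : ℕ) {c : ℝ} (hc : 0 ≤ c) (v : EuclideanSpace ℝ (Fin (m+1)))
    (hv : ‖v‖ = 1) :
    volume {u : EuclideanSpace ℝ (Fin (m+1)) | ‖u‖ < 1 ∧ |(inner ℝ u v : ℝ)| ≤ c} ≤
      ENNReal.ofReal (2 * c) * volume {g : Fin m → ℝ | ∑ i, g i ^ 2 ≤ 1} := by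
  classical
  -- extend v to an orthonormal basis
  have hcard : Module.finrank ℝ (EuclideanSpace ℝ (Fin (m+1))) = Fintype.card (Fin (m+1)) := by
    simp [finrank_euclideanSpace]
  have horth : Orthonormal ℝ (({0} : Set (Fin (m+1))).restrict (fun _ => v)) := by
    constructor
    · intro i; exact hv
    · intro i j hij
      have h1 : i.1 = (0 : Fin (m+1)) := i.2
      have h2 : j.1 = (0 : Fin (m+1)) := j.2
      exact absurd (Subtype.ext (h1.trans h2.symm)) hij
  obtain ⟨b, hb⟩ := horth.exists_orthonormalBasis_extension_of_card_eq hcard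
  have hb0 : b 0 = v := hb 0 rfl
  set S : Set (EuclideanSpace ℝ (Fin (m+1))) := {w | ‖w‖ < 1 ∧ |w 0| ≤ c} with hS_def
  have hSmeas : MeasurableSet S := by
    have : S = Metric.ball (0 : EuclideanSpace ℝ (Fin (m+1))) 1 ∩ {w | |w 0| ≤ c} := by
      ext w; simp [hS_def, mem_ball_zero_iff]
    rw [this]
    exact measurableSet_ball.inter <|
      measurableSet_le ((EuclideanSpace.proj (0 : Fin (m+1))).continuous.measurable.abs)
        measurable_const
  have hpre : {u : EuclideanSpace ℝ (Fin (m+1)) | ‖u‖ < 1 ∧ |(inner ℝ u v : ℝ)| ≤ c}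
      = b.repr ⁻¹' S := by
    ext u
    simp only [Set.mem_setOf_eq, Set.mem_preimage, hS_def]
    rw [LinearIsometryEquiv.norm_map]
    have : b.repr u 0 = (inner ℝ u v : ℝ) := by
      rw [b.repr_apply_apply, hb0, real_inner_comm]
    rw [this]
  rw [hpre, (b.measurePreserving_repr).measure_preimage hSmeas.nullMeasurableSet]
  -- move to the pi space
  set T : Set (Fin (m+1) → ℝ) := {f | |f 0| ≤ c ∧ ∑ i : Fin m, f i.succ ^ 2 ≤ 1} with hT_def
  have hTmeas : MeasurableSet T := by
    have h1 : MeasurableSet {f : Fin (m+1) → ℝ | |f 0| ≤ c} :=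
      measurableSet_le (measurable_pi_apply 0).abs measurable_const
    have h2 : MeasurableSet {f : Fin (m+1) → ℝ | ∑ i : Fin m, f i.succ ^ 2 ≤ 1} :=
      measurableSet_le (Finset.measurable_sum _ fun (i : Fin m) _ =>
        (measurable_pi_apply i.succ).pow_const 2) measurable_const
    exact h1.inter h2
  have hsub : S ⊆ ((MeasurableEquiv.toLp 2 (Fin (m+1) → ℝ)).symm) ⁻¹' T := by
    rintro w ⟨hw1, hw2⟩
    have happ : ∀ i, ((MeasurableEquiv.toLp 2 (Fin (m+1) → ℝ)).symm) w i = w i := fun i => rfl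
    have hnorm : ∑ j, w j ^ 2 = ‖w‖ ^ 2 := by
      rw [EuclideanSpace.norm_eq, Real.sq_sqrt (by positivity)]
      refine Finset.sum_congr rfl fun i _ => ?_
      rw [Real.norm_eq_abs, sq_abs]
    have hsplit : ∑ j : Fin (m+1), w j ^ 2 = w 0 ^ 2 + ∑ i : Fin m, w i.succ ^ 2 :=
      Fin.sum_univ_succ _
    constructor
    · simpa only [happ] using hw2
    · simp only [happ]
      have h1 : ‖w‖ ^ 2 ≤ 1 := by nlinarith [norm_nonneg w]
      nlinarith [sq_nonneg (w 0)]
  calc volume S ≤ volume (((MeasurableEquiv.toLp 2 (Fin (m+1) → ℝ)).symm) ⁻¹' T) :=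
        measure_mono hsub
    _ = volume T := (EuclideanSpace.volume_preserving_symm_measurableEquiv_toLp
        (Fin (m+1))).measure_preimage hTmeas.nullMeasurableSet
    _ ≤ ENNReal.ofReal (2 * c) * volume {g : Fin m → ℝ | ∑ i, g i ^ 2 ≤ 1} := by
        have hTpre : T = (MeasurableEquiv.piFinSuccAbove (fun _ : Fin (m+1) => ℝ) 0) ⁻¹'
            ((Set.Icc (-c) c) ×ˢ {g : Fin m → ℝ | ∑ i, g i ^ 2 ≤ 1}) := by
          ext f
          simp only [hT_def, Set.mem_setOf_eq, Set.mem_preimage, Set.mem_prod,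
            MeasurableEquiv.piFinSuccAbove_apply, Set.mem_Icc, Fin.succAbove_zero]
          rw [abs_le]
          tauto
        rw [hTpre, (volume_preserving_piFinSuccAbove (fun _ : Fin (m+1) => ℝ) 0).measure_preimage]
        · rw [Measure.volume_eq_prod, Measure.prod_prod, Real.volume_Icc]
          have : c - -c = 2 * c := by ring
          rw [this]
        · refine (measurableSet_Icc.prod ?_).nullMeasurableSet
          exact measurableSet_le
            (Finset.measurable_sum _ fun i _ => (measurable_pi_apply i).pow_const 2)
            measurable_const

/-- The key numeric inequality. -/
lemma key_ineq (m N K : ℕ) (hN : 2 ≤ N) (hK : 2 * (K : ℝ) ≤ (N : ℝ) * ((N : ℝ) - 1)) :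
    (K : ℝ) * (2 * (Real.sqrt (8 / (π * ((m : ℝ) + 1))) * (1 / (N : ℝ) ^ 2))) *
        (Real.sqrt π ^ m / Real.Gamma ((m : ℝ) / 2 + 1)) <
      Real.sqrt π ^ (m + 1) / Real.Gamma (((m : ℝ) + 1) / 2 + 1) := by
  have hπ := Real.pi_gt_d6
  have hπpos : (0:ℝ) < π := by linarith
  have hm0 : (0:ℝ) ≤ (m:ℝ) := Nat.cast_nonneg m
  have hNpos : (0:ℝ) < (N:ℝ) := by positivity
  have hN2 : (2:ℝ) ≤ (N:ℝ) := by exact_mod_cast hN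
  set a : ℝ := Real.sqrt (8 / (π * ((m : ℝ) + 1))) with ha_def
  have ha : 0 < a := Real.sqrt_pos.mpr (by positivity)
  have hG1 : 0 < Real.Gamma ((m : ℝ) / 2 + 1) := Real.Gamma_pos_of_pos (by positivity)
  have hG2 : 0 < Real.Gamma (((m : ℝ) + 1) / 2 + 1) := Real.Gamma_pos_of_pos (by positivity)
  have hsp : 0 < Real.sqrt π := Real.sqrt_pos.mpr hπpos
  have hspm : 0 < Real.sqrt π ^ m := pow_pos hsp m
  -- Wendel
  have hwendel : Real.Gamma (((m : ℝ) + 1) / 2 + 1) ≤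
      Real.Gamma ((m : ℝ) / 2 + 1) * Real.sqrt ((m : ℝ) / 2 + 1) := by
    have := gamma_wendel (x := (m : ℝ) / 2 + 1) (by positivity)
    have harg : (m : ℝ) / 2 + 1 + 1 / 2 = ((m : ℝ) + 1) / 2 + 1 := by ring
    rwa [harg] at this
  -- a * sqrt(m/2+1) ≤ sqrt π
  have hsqrtle : a * Real.sqrt ((m : ℝ) / 2 + 1) ≤ Real.sqrt π := by
    rw [ha_def, ← Real.sqrt_mul (by positivity)]
    apply Real.sqrt_le_sqrt
    rw [div_mul_eq_mul_div, div_le_iff₀ (by positivity)]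
    have hπ2 : (9.86:ℝ) ≤ π * π := by nlinarith
    nlinarith [mul_le_mul_of_nonneg_right hπ2 hm0]
  -- 2 K c < a
  have h3 : 2 * (K : ℝ) * (a * (1 / (N : ℝ) ^ 2)) < a := by
    have h4 : 2 * (K : ℝ) * a ≤ ((N : ℝ) * ((N : ℝ) - 1)) * a :=
      mul_le_mul_of_nonneg_right hK ha.le
    have h5 : ((N : ℝ) * ((N : ℝ) - 1)) * a < (N : ℝ) ^ 2 * a := by nlinarith
    rw [mul_comm a (1 / (N : ℝ) ^ 2), ← mul_assoc]
    rw [show 2 * (K : ℝ) * (1 / (N : ℝ) ^ 2) * a = (2 * (K : ℝ) * a) / (N : ℝ) ^ 2 by ring]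
    rw [div_lt_iff₀ (by positivity)]
    nlinarith
  have hmain : (2 * (K : ℝ) * (a * (1 / (N : ℝ) ^ 2))) * Real.Gamma (((m : ℝ) + 1) / 2 + 1) <
      Real.sqrt π * Real.Gamma ((m : ℝ) / 2 + 1) :=
    calc (2 * (K : ℝ) * (a * (1 / (N : ℝ) ^ 2))) * Real.Gamma (((m : ℝ) + 1) / 2 + 1)
        < a * Real.Gamma (((m : ℝ) + 1) / 2 + 1) := mul_lt_mul_of_pos_right h3 hG2
      _ ≤ a * (Real.Gamma ((m : ℝ) / 2 + 1) * Real.sqrt ((m : ℝ) / 2 + 1)) :=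
          mul_le_mul_of_nonneg_left hwendel ha.le
      _ = (a * Real.sqrt ((m : ℝ) / 2 + 1)) * Real.Gamma ((m : ℝ) / 2 + 1) := by ring
      _ ≤ Real.sqrt π * Real.Gamma ((m : ℝ) / 2 + 1) :=
          mul_le_mul_of_nonneg_right hsqrtle hG1.le
  have hrw : (K : ℝ) * (2 * (a * (1 / (N : ℝ) ^ 2))) * (Real.sqrt π ^ m /
      Real.Gamma ((m : ℝ) / 2 + 1)) =
      ((K : ℝ) * (2 * (a * (1 / (N : ℝ) ^ 2))) * Real.sqrt π ^ m) /
        Real.Gamma ((m : ℝ) / 2 + 1) := by ring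
  have hpow : Real.sqrt π ^ (m + 1) = Real.sqrt π ^ m * Real.sqrt π := pow_succ _ _
  rw [hrw, hpow, div_lt_div_iff₀ hG1 hG2]
  nlinarith [mul_lt_mul_of_pos_right hmain hspm]

/-- For any `N` distinct points in `ℝ^d` there is a unit vector `u` such that projecting
onto `u` preserves pairwise distances up to a factor `√(8/(π d)) / N²`. -/
theorem exists_unit_vector_projection (d N : ℕ) (hd : 0 < d)
    (x : Fin N → EuclideanSpace ℝ (Fin d)) (hx : Function.Injective x) :
    ∃ u : EuclideanSpace ℝ (Fin d), ‖u‖ = 1 ∧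
      ∀ i j : Fin N, i ≠ j →
        Real.sqrt (8 / (Real.pi * d)) * (1 / (N : ℝ) ^ 2) * ‖x i - x j‖ ≤
            |(inner ℝ u (x i - x j) : ℝ)| ∧
          |(inner ℝ u (x i - x j) : ℝ)| ≤ ‖x i - x j‖ := by
  classical
  rcases le_or_gt N 1 with hN | hN
  · refine ⟨EuclideanSpace.single ⟨0, hd⟩ 1, by simp [EuclideanSpace.norm_single], ?_⟩
    intro i j hij
    exact absurd (Fin.ext (by omega)) hij
  · obtain ⟨m, rfl⟩ : ∃ m, d = m + 1 := ⟨d - 1, by omega⟩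
    push_cast
    have hNpos : (0:ℝ) < (N:ℝ) := by exact_mod_cast Nat.lt_of_lt_of_le Nat.zero_lt_one hN.le
    have hπpos : (0:ℝ) < π := Real.pi_pos
    set c : ℝ := Real.sqrt (8 / (π * ((m:ℝ) + 1))) * (1 / (N : ℝ) ^ 2) with hc_def
    have hcpos : 0 < c := by
      refine mul_pos (Real.sqrt_pos.mpr (by positivity)) ?_
      exact div_pos one_pos (pow_pos hNpos 2)
    set P : Finset (Fin N × Fin N) := Finset.univ.filter (fun p => p.1 < p.2) with hP_def
    have hxne : ∀ p : Fin N × Fin N, p ∈ P → x p.1 - x p.2 ≠ 0 := by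
      intro p hp
      rw [hP_def, Finset.mem_filter] at hp
      exact sub_ne_zero.mpr fun h => absurd (hx h) (ne_of_lt hp.2)
    -- cardinality bound
    have hPcard : P.card + P.card ≤ N * N - N := by
      set P' : Finset (Fin N × Fin N) := Finset.univ.filter (fun p => p.2 < p.1) with hP'_def
      have hcc : P.card = P'.card := by
        refine Finset.card_bij' (fun p _ => (p.2, p.1)) (fun p _ => (p.2, p.1)) ?_ ?_ ?_ ?_
        · intro p hp; simp only [hP_def, hP'_def, Finset.mem_filter, Finset.mem_univ,
            true_and] at hp ⊢; exact hp
        · intro p hp; simp only [hP_def, hP'_def, Finset.mem_filter, Finset.mem_univ,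
            true_and] at hp ⊢; exact hp
        · intro p hp; rfl
        · intro p hp; rfl
      have hdisj : Disjoint P P' := by
        rw [Finset.disjoint_left]
        intro p hp hp'
        simp only [hP_def, hP'_def, Finset.mem_filter, Finset.mem_univ, true_and] at hp hp'
        exact absurd hp' (not_lt.mpr hp.le)
      have hsub2 : P ∪ P' ⊆ (Finset.univ : Finset (Fin N)).offDiag := by
        intro p hp
        simp only [Finset.mem_offDiag, Finset.mem_univ, true_and]
        rcases Finset.mem_union.mp hp with h | h
        · simp only [hP_def, Finset.mem_filter, Finset.mem_univ, true_and] at h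
          exact ne_of_lt h
        · simp only [hP'_def, Finset.mem_filter, Finset.mem_univ, true_and] at h
          exact ne_of_gt h
      have hoff : ((Finset.univ : Finset (Fin N)).offDiag).card = N * N - N := by
        rw [Finset.offDiag_card]; simp
      calc P.card + P.card = P.card + P'.card := by rw [hcc]
        _ = (P ∪ P').card := (Finset.card_union_of_disjoint hdisj).symm
        _ ≤ ((Finset.univ : Finset (Fin N)).offDiag).card := Finset.card_le_card hsub2
        _ = N * N - N := hoff
    have hKreal : 2 * (P.card : ℝ) ≤ (N : ℝ) * ((N : ℝ) - 1) := by
      have hNN : N ≤ N * N := Nat.le_mul_of_pos_left N (by omega)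
      have h := (Nat.cast_le (α := ℝ)).mpr hPcard
      rw [Nat.cast_add, Nat.cast_sub hNN] at h
      push_cast at h
      nlinarith
    -- bad sets
    set B : Fin N × Fin N → Set (EuclideanSpace ℝ (Fin (m+1))) := fun p =>
      {u | ‖u‖ < 1 ∧ |(inner ℝ u (‖x p.1 - x p.2‖⁻¹ • (x p.1 - x p.2)) : ℝ)| ≤ c} with hB_def
    have hslab : ∀ p ∈ P, volume (B p) ≤
        ENNReal.ofReal (2 * c) * ENNReal.ofReal (Real.sqrt π ^ m / Real.Gamma ((m:ℝ) / 2 + 1)) := by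
      intro p hp
      have h := slab_volume_le m hcpos.le _ (norm_smul_inv_norm (𝕜 := ℝ) (hxne p hp))
      rwa [volume_pi_ball] at h
    have hG2pos : 0 < Real.Gamma (((m:ℝ) + 1) / 2 + 1) := Real.Gamma_pos_of_pos (by positivity)
    have hVballpos : 0 < Real.sqrt π ^ (m+1) / Real.Gamma (((m:ℝ) + 1) / 2 + 1) :=
      div_pos (pow_pos (Real.sqrt_pos.mpr hπpos) _) hG2pos
    have hballvol : volume (Metric.ball (0 : EuclideanSpace ℝ (Fin (m+1))) 1)
        = ENNReal.ofReal (Real.sqrt π ^ (m+1) / Real.Gamma (((m:ℝ) + 1) / 2 + 1)) := by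
      rw [EuclideanSpace.volume_ball]
      norm_num [Fintype.card_fin]
    have hVmnn : (0:ℝ) ≤ Real.sqrt π ^ m / Real.Gamma ((m:ℝ) / 2 + 1) :=
      le_of_lt (div_pos (pow_pos (Real.sqrt_pos.mpr hπpos) _)
        (Real.Gamma_pos_of_pos (by positivity)))
    have hcover : volume (⋃ p ∈ P, B p) <
        volume (Metric.ball (0 : EuclideanSpace ℝ (Fin (m+1))) 1) := by
      have hkey := key_ineq m N P.card (by omega) hKreal
      calc volume (⋃ p ∈ P, B p) ≤ ∑ p ∈ P, volume (B p) := measure_biUnion_finset_le P B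
        _ ≤ ∑ _p ∈ P, (ENNReal.ofReal (2 * c) *
              ENNReal.ofReal (Real.sqrt π ^ m / Real.Gamma ((m:ℝ) / 2 + 1))) :=
            Finset.sum_le_sum hslab
        _ = (P.card : ENNReal) * (ENNReal.ofReal (2 * c) *
              ENNReal.ofReal (Real.sqrt π ^ m / Real.Gamma ((m:ℝ) / 2 + 1))) := by
            rw [Finset.sum_const, nsmul_eq_mul]
        _ = ENNReal.ofReal ((P.card : ℝ) * (2 * c) *
              (Real.sqrt π ^ m / Real.Gamma ((m:ℝ) / 2 + 1))) := by
            rw [ENNReal.ofReal_mul (mul_nonneg (Nat.cast_nonneg _)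
              (by linarith [hcpos] : (0:ℝ) ≤ 2 * c)),
              ENNReal.ofReal_mul (Nat.cast_nonneg _), ENNReal.ofReal_natCast, mul_assoc]
        _ < ENNReal.ofReal (Real.sqrt π ^ (m+1) / Real.Gamma (((m:ℝ) + 1) / 2 + 1)) := by
            rw [ENNReal.ofReal_lt_ofReal_iff hVballpos]
            calc (P.card : ℝ) * (2 * c) * (Real.sqrt π ^ m / Real.Gamma ((m:ℝ) / 2 + 1))
                = (P.card : ℝ) * (2 * (Real.sqrt (8 / (π * ((m:ℝ) + 1))) * (1 / (N : ℝ) ^ 2))) *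
                  (Real.sqrt π ^ m / Real.Gamma ((m:ℝ) / 2 + 1)) := by rw [hc_def]
              _ < _ := hkey
        _ = volume (Metric.ball (0 : EuclideanSpace ℝ (Fin (m+1))) 1) := hballvol.symm
    -- pick a good point
    have hne : ¬ (Metric.ball (0 : EuclideanSpace ℝ (Fin (m+1))) 1 ⊆ ⋃ p ∈ P, B p) :=
      fun hsubs => absurd (measure_mono hsubs) (not_le.mpr hcover)
    obtain ⟨u, huball, hunot⟩ := Set.not_subset.mp hne
    have hult : ‖u‖ < 1 := mem_ball_zero_iff.mp huball
    have hgood : ∀ p ∈ P, c < |(inner ℝ u (‖x p.1 - x p.2‖⁻¹ • (x p.1 - x p.2)) : ℝ)| := by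
      intro p hp
      by_contra h
      push_neg at h
      exact hunot (Set.mem_biUnion hp ⟨hult, h⟩)
    have hp0 : ((⟨0, by omega⟩ : Fin N), (⟨1, by omega⟩ : Fin N)) ∈ P := by
      simp [hP_def, Fin.mk_lt_mk]
    have hu0 : u ≠ 0 := by
      intro h
      have h2 := hgood _ hp0
      rw [h] at h2
      simp only [inner_zero_left, abs_zero] at h2
      linarith
    have hupos : 0 < ‖u‖ := norm_pos_iff.mpr hu0
    have huinv : 1 ≤ ‖u‖⁻¹ := by
      have h1 : ‖u‖ * ‖u‖⁻¹ = 1 := mul_inv_cancel₀ hupos.ne'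
      nlinarith [inv_nonneg.mpr (norm_nonneg u)]
    have hmain : ∀ p : Fin N × Fin N, p ∈ P →
        c * ‖x p.1 - x p.2‖ ≤ |(inner ℝ (‖u‖⁻¹ • u) (x p.1 - x p.2) : ℝ)| ∧
        |(inner ℝ (‖u‖⁻¹ • u) (x p.1 - x p.2) : ℝ)| ≤ ‖x p.1 - x p.2‖ := by
      intro p hp
      set y := x p.1 - x p.2 with hy_def
      have hy0 : y ≠ 0 := hxne p hp
      have hyn : 0 < ‖y‖ := norm_pos_iff.mpr hy0
      have hg := hgood p hp
      rw [real_inner_smul_right, abs_mul, abs_inv, abs_norm] at hg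
      have hlow : c * ‖y‖ < |(inner ℝ u y : ℝ)| := by
        have h := mul_lt_mul_of_pos_right hg hyn
        have h2 : ‖y‖⁻¹ * |(inner ℝ u y : ℝ)| * ‖y‖ = |(inner ℝ u y : ℝ)| := by field_simp
        rw [h2] at h
        exact h
      constructor
      · rw [real_inner_smul_left, abs_mul, abs_inv, abs_norm]
        have h3 : |(inner ℝ u y : ℝ)| ≤ ‖u‖⁻¹ * |(inner ℝ u y : ℝ)| :=
          le_mul_of_one_le_left (abs_nonneg _) huinv
        linarith
      · have h4 := abs_real_inner_le_norm (‖u‖⁻¹ • u) y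
        rwa [norm_smul, norm_inv, norm_norm, inv_mul_cancel₀ hupos.ne', one_mul] at h4
    refine ⟨‖u‖⁻¹ • u, ?_, ?_⟩
    · rw [norm_smul, norm_inv, norm_norm, inv_mul_cancel₀ hupos.ne']
    · intro i j hij
      rcases lt_or_gt_of_ne hij with h | h
      · exact hmain (i, j) (by simp [hP_def, h])
      · have hm := hmain (j, i) (by simp [hP_def, h])
        have hswap : x i - x j = -(x j - x i) := by abel
        rw [hswap, inner_neg_right, abs_neg, norm_neg]
        exact hm
end

section
/- Fix ε > 0 and suppose C = N^ε. Suppose every function g : [N] → [C] can be computed by some ReLU neural network with at most W' parameters, and suppose the class of ReLU networks with W parameters has VC dimension O(W²) (so that shattering a set of size M requires Ω(√M) parameters). Suppose further that given a network computing g with W' parameters, one can compute the map (n, i) ↦ (i-th bit of g(n)) with a network of O(W' + log N) parameters. Then W' = Ω(√(N log N)). -/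
/-- Lower bound for memorization with `C = N^ε` classes. `Net W` denotes the class of
boolean functions (on encoded pairs `(n, i)`) computable by ReLU networks with `W`
parameters. Assume the VC-dimension bound `O(W²)` (shattering `M` points with `W`
parameters forces `M ≤ b·W²`), and assume that whenever every `g : [N] → [C]` is
computable with `W' N` parameters, every boolean function on
`[N] × [⌈ε log₂ N⌉]` is computable with `a·(W' N + ⌈log₂ N⌉)` parameters (bit
extraction). Then `W' N = Ω(√(N log N))`. -/
theorem memorization_parameter_lower_bound
    (ε b : ℝ) (hε : 0 < ε) (hb : 0 < b) (a : ℕ) (ha : 0 < a)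
    (Net : ℕ → Set ((ℕ × ℕ) → Bool)) (W' : ℕ → ℕ)
    (hVC : ∀ (W M : ℕ) (pts : Fin M → ℕ × ℕ),
      (∀ y : Fin M → Bool, ∃ h ∈ Net W, ∀ i, h (pts i) = y i) →
        (M : ℝ) ≤ b * (W : ℝ) ^ 2)
    (hexpress : ∀ N : ℕ, 2 ≤ N → ∀ f : ℕ × ℕ → Bool,
      ∃ h ∈ Net (a * (W' N + Nat.clog 2 N)),
        ∀ p : ℕ × ℕ, p.1 ∈ Finset.Icc 1 N →
          p.2 ∈ Finset.Icc 1 ⌈ε * Real.logb 2 N⌉₊ → h p = f p) :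
    ∃ c : ℝ, 0 < c ∧ ∃ N₀ : ℕ, ∀ N : ℕ, N₀ ≤ N →
      c * Real.sqrt ((N : ℝ) * Real.log N) ≤ (W' N : ℝ) := by
  classical
  have hlog2 : (0:ℝ) < Real.log 2 := Real.log_pos (by norm_num)
  set κ : ℝ := ε / (Real.log 2 * b * (a:ℝ)^2) with hκdef
  have ha' : (0:ℝ) < (a:ℝ) := by exact_mod_cast ha
  have hκ : 0 < κ := by positivity
  -- Key inequality from shattering
  have key : ∀ N : ℕ, 2 ≤ N →
      Real.sqrt κ * Real.sqrt ((N:ℝ) * Real.log N)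
        ≤ (W' N : ℝ) + (Nat.clog 2 N : ℝ) := by
    intro N hN
    set m := ⌈ε * Real.logb 2 N⌉₊ with hm
    set L := Nat.clog 2 N with hL
    have hshatter : ((N * m : ℕ) : ℝ) ≤ b * ((a * (W' N + L) : ℕ) : ℝ)^2 := by
      apply hVC _ _ (fun i : Fin (N * m) =>
        (((finProdFinEquiv.symm i).1 : ℕ) + 1, ((finProdFinEquiv.symm i).2 : ℕ) + 1))
      intro y
      obtain ⟨h, hmem, hag⟩ := hexpress N hN (fun p =>
        if hp : p.1 - 1 < N ∧ p.2 - 1 < m then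
          y (finProdFinEquiv (⟨p.1 - 1, hp.1⟩, ⟨p.2 - 1, hp.2⟩)) else false)
      refine ⟨h, hmem, fun i => ?_⟩
      have h1 : ((finProdFinEquiv.symm i).1 : ℕ) + 1 ∈ Finset.Icc 1 N :=
        Finset.mem_Icc.2 ⟨Nat.succ_le_succ (Nat.zero_le _), (finProdFinEquiv.symm i).1.isLt⟩
      have h2 : ((finProdFinEquiv.symm i).2 : ℕ) + 1 ∈ Finset.Icc 1 m :=
        Finset.mem_Icc.2 ⟨Nat.succ_le_succ (Nat.zero_le _), (finProdFinEquiv.symm i).2.isLt⟩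
      rw [hag _ h1 h2]
      have hc : (((finProdFinEquiv.symm i).1 : ℕ) + 1) - 1 < N ∧
          (((finProdFinEquiv.symm i).2 : ℕ) + 1) - 1 < m :=
        ⟨by simpa using (finProdFinEquiv.symm i).1.isLt,
         by simpa using (finProdFinEquiv.symm i).2.isLt⟩
      simp only [dif_pos hc]
      congr 1
      have : ((⟨((finProdFinEquiv.symm i).1 : ℕ) + 1 - 1, hc.1⟩ : Fin N),
          (⟨((finProdFinEquiv.symm i).2 : ℕ) + 1 - 1, hc.2⟩ : Fin m))
          = finProdFinEquiv.symm i := by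
        ext <;> simp
      rw [this, Equiv.apply_symm_apply]
    -- numeric manipulation
    have hNpos : (0:ℝ) < (N:ℝ) := by positivity
    have hmge : ε * Real.logb 2 N ≤ (m:ℝ) := Nat.le_ceil _
    have h1 : (N:ℝ) * (ε * Real.logb 2 N) ≤ b * ((a:ℝ) * ((W' N:ℝ) + (L:ℝ)))^2 := by
      calc (N:ℝ) * (ε * Real.logb 2 N) ≤ (N:ℝ) * (m:ℝ) := by
            exact mul_le_mul_of_nonneg_left hmge (le_of_lt hNpos)
        _ ≤ b * ((a:ℝ) * ((W' N:ℝ) + (L:ℝ)))^2 := by push_cast at hshatter ⊢; linarith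
    have h2 : κ * ((N:ℝ) * Real.log N) ≤ ((W' N:ℝ) + (L:ℝ))^2 := by
      have heq : κ * ((N:ℝ) * Real.log N) = ((N:ℝ) * (ε * Real.logb 2 N)) / (b * (a:ℝ)^2) := by
        rw [hκdef, Real.logb]
        field_simp
      rw [heq, div_le_iff₀ (by positivity)]
      nlinarith [h1]
    have h3 : Real.sqrt (κ * ((N:ℝ) * Real.log N)) ≤ (W' N:ℝ) + (L:ℝ) := by
      have := Real.sqrt_le_sqrt h2
      rwa [Real.sqrt_sq (by positivity)] at this
    rwa [Real.sqrt_mul hκ.le] at h3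
  -- eventual bound on clog
  have hclog : ∀ N : ℕ, 2 ≤ N → (Nat.clog 2 N : ℝ) ≤ Real.log N / Real.log 2 + 1 := by
    intro N hN
    have h1 : Nat.clog 2 N - 1 + 1 = Nat.clog 2 N :=
      Nat.succ_pred_eq_of_pos (Nat.clog_pos (by norm_num) hN)
    have h2 : (2:ℕ) ^ (Nat.clog 2 N - 1) < N := Nat.pow_pred_clog_lt_self (by norm_num) (by omega)
    have h3 : ((2:ℝ)) ^ (Nat.clog 2 N - 1) < (N:ℝ) := by exact_mod_cast h2
    have h4 : ((Nat.clog 2 N - 1 : ℕ) : ℝ) * Real.log 2 ≤ Real.log N := by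
      rw [← Real.log_pow]
      exact Real.log_le_log (by positivity) h3.le
    have h5 : ((Nat.clog 2 N - 1 : ℕ) : ℝ) = (Nat.clog 2 N : ℝ) - 1 := by
      have hp : 1 ≤ Nat.clog 2 N := Nat.clog_pos (by norm_num) hN
      rw [Nat.cast_sub hp, Nat.cast_one]
    rw [h5] at h4
    rw [div_add' _ _ _ (ne_of_gt hlog2), le_div_iff₀ hlog2]
    nlinarith
  -- eventual domination of log by sqrt
  set c : ℝ := Real.sqrt κ / 2 with hc
  have hcpos : 0 < c := by positivity
  have hlo : (fun x : ℝ => Real.log x) =o[Filter.atTop] fun x => x ^ ((1:ℝ)/2) :=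
    isLittleO_log_rpow_atTop (by norm_num)
  have hδ : (0:ℝ) < c * Real.log 2 / (2 * (1 + Real.log 2)) := by positivity
  have hev : ∀ᶠ x : ℝ in Filter.atTop,
      Real.log x / Real.log 2 + 1 ≤ c * Real.sqrt (x * Real.log x) := by
    have h1 := hlo.def hδ
    filter_upwards [h1, Filter.eventually_ge_atTop (Real.exp 1),
      Filter.eventually_ge_atTop (0:ℝ)] with x hx hxe hx0
    have hlogx : 1 ≤ Real.log x := by
      rw [show (1:ℝ) = Real.log (Real.exp 1) by simp]
      exact Real.log_le_log (Real.exp_pos 1) hxe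
    have hsq : Real.sqrt (x * Real.log x) = Real.sqrt x * Real.sqrt (Real.log x) :=
      Real.sqrt_mul hx0 _
    have hsl : 1 ≤ Real.sqrt (Real.log x) := by
      rw [show (1:ℝ) = Real.sqrt 1 by simp]
      exact Real.sqrt_le_sqrt hlogx
    have hrp : x ^ ((1:ℝ)/2) = Real.sqrt x := (Real.sqrt_eq_rpow x).symm
    rw [Real.norm_eq_abs, Real.norm_eq_abs, abs_of_nonneg (by linarith),
      abs_of_nonneg (Real.rpow_nonneg hx0 _), hrp] at hx
    have key1 : Real.log x / Real.log 2 + 1 ≤ (1 + Real.log 2)/Real.log 2 * Real.log x := by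
      have heq : (1 + Real.log 2)/Real.log 2 * Real.log x
          = Real.log x / Real.log 2 + Real.log x := by field_simp
      rw [heq]
      linarith
    have key2 : (1 + Real.log 2)/Real.log 2 * Real.log x ≤ c/2 * Real.sqrt x := by
      have := mul_le_mul_of_nonneg_left hx (le_of_lt (by positivity :
        (0:ℝ) < (1 + Real.log 2)/Real.log 2))
      calc (1 + Real.log 2)/Real.log 2 * Real.log x
          ≤ (1 + Real.log 2)/Real.log 2 * (c * Real.log 2 / (2 * (1 + Real.log 2)) * Real.sqrt x) := this
        _ = c/2 * Real.sqrt x := by field_simp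
    have key3 : c/2 * Real.sqrt x ≤ c * Real.sqrt (x * Real.log x) := by
      rw [hsq]
      have hcx : (0:ℝ) ≤ c * Real.sqrt x := by positivity
      nlinarith [mul_le_mul_of_nonneg_left hsl hcx, Real.sqrt_nonneg x]
    linarith
  obtain ⟨x₀, hx₀⟩ := Filter.eventually_atTop.mp hev
  refine ⟨c, hcpos, max 2 ⌈x₀⌉₊, fun N hN => ?_⟩
  have hN2 : 2 ≤ N := le_trans (le_max_left _ _) hN
  have hNx : x₀ ≤ (N:ℝ) := le_trans (Nat.le_ceil _) (by exact_mod_cast le_trans (le_max_right _ _) hN)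
  have hkey := key N hN2
  have hcl := hclog N hN2
  have hev' := hx₀ (N:ℝ) hNx
  have : (Nat.clog 2 N : ℝ) ≤ c * Real.sqrt ((N:ℝ) * Real.log N) := le_trans hcl hev'
  have h2c : Real.sqrt κ = 2 * c := by rw [hc]; ring
  nlinarith [Real.sqrt_nonneg ((N:ℝ) * Real.log N)]
end
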